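/- arXiv:0812.0560 — 7 statements merged into one kernel-verified Lean document; each statement's English description precedes it below -/
import Mathlib

section
/- Let G be a group with symmetric generating set A containing the identity, and suppose that for every x ∈ G there exists a ∈ A with ℓ_A(ax) = 1 + ℓ_A(x). Then for every nonnegative integer h, the set C = ⋃_{q≥0} S_e((2h+1)q) is an h-net in (G, d_A), i.e., G = AʰC. -/
/-!
Write `ℓ(x) = (2h+1)q + r` with `0 ≤ r ≤ 2h`. If `r ≤ h`, cut the first `r` letters off a
geodesic word for `x`: they form an element of `Aʰ` and the rest lies on the sphere of
radius `(2h+1)q`. If `r > h`, the hypothesis lets us prolong `x` geodesically by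
`2h+1-r ≤ h` letters to reach the sphere of radius `(2h+1)(q+1)`, and `A` is symmetric, so
the letters can be undone from `Aʰ`.
-/

open Pointwise

noncomputable def wordLen {G : Type*} [Group G] (A : Set G) (x : G) : ℕ :=
  sInf {r | ∃ l : List G, (∀ a ∈ l, a ∈ A) ∧ l.prod = x ∧ l.length = r}

section WordLength

variable {G : Type*} [Group G] {A : Set G}

lemma wordLen_le_length {x : G} {l : List G} (hl : ∀ a ∈ l, a ∈ A) (hx : l.prod = x) :
    wordLen A x ≤ l.length :=
  Nat.sInf_le ⟨l, hl, hx, rfl⟩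

lemma exists_list_length_eq_wordLen (hsym : ∀ a ∈ A, a⁻¹ ∈ A)
    (hgen : Subgroup.closure A = ⊤) (x : G) :
    ∃ l : List G, (∀ a ∈ l, a ∈ A) ∧ l.prod = x ∧ l.length = wordLen A x := by
  have hx : x ∈ Submonoid.closure (A ∪ A⁻¹) := by
    rw [← Subgroup.closure_toSubmonoid, hgen]
    trivial
  obtain ⟨l, hl, hlx⟩ := Submonoid.exists_list_of_mem_closure hx
  have hlA : ∀ a ∈ l, a ∈ A := fun a ha =>
    (hl a ha).elim id fun ha' => inv_inv a ▸ hsym a⁻¹ ha'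
  exact Nat.sInf_mem (s := {r | ∃ l : List G, (∀ a ∈ l, a ∈ A) ∧ l.prod = x ∧ l.length = r})
    ⟨l.length, l, hlA, hlx, rfl⟩

lemma wordLen_mul_le (hsym : ∀ a ∈ A, a⁻¹ ∈ A) (hgen : Subgroup.closure A = ⊤) (x y : G) :
    wordLen A (x * y) ≤ wordLen A x + wordLen A y := by
  obtain ⟨l, hlA, rfl, hl⟩ := exists_list_length_eq_wordLen hsym hgen x
  obtain ⟨l', hlA', rfl, hl'⟩ := exists_list_length_eq_wordLen hsym hgen y
  rw [← hl, ← hl', ← List.length_append]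
  refine wordLen_le_length (fun a ha => ?_) List.prod_append
  exact (List.mem_append.1 ha).elim (hlA a) (hlA' a)

lemma list_prod_mem_pow_length {l : List G} (hl : ∀ a ∈ l, a ∈ A) : l.prod ∈ A ^ l.length := by
  induction l with
  | nil => simp
  | cons a t ih =>
    rw [List.prod_cons, List.length_cons, pow_succ']
    exact Set.mul_mem_mul (hl a List.mem_cons_self) (ih fun b hb => hl b (List.mem_cons_of_mem a hb))

lemma inv_mem_pow_of_mem (hsym : ∀ a ∈ A, a⁻¹ ∈ A) {m : ℕ} {p : G} (hp : p ∈ A ^ m) :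
    p⁻¹ ∈ A ^ m := by
  have hA : A⁻¹ = A := Set.inv_eq_self_iff_inv_subset.2 fun a ha => inv_inv a ▸ hsym a⁻¹ ha
  rw [← hA, inv_pow]
  exact Set.inv_mem_inv.2 hp

lemma exists_mem_pow_wordLen_inv_mul_add_eq (hsym : ∀ a ∈ A, a⁻¹ ∈ A)
    (hgen : Subgroup.closure A = ⊤) {r : ℕ} {x : G} (hr : r ≤ wordLen A x) :
    ∃ p ∈ A ^ r, wordLen A (p⁻¹ * x) + r = wordLen A x := by
  obtain ⟨l, hlA, hlx, hl⟩ := exists_list_length_eq_wordLen hsym hgen x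
  have htakeA : ∀ a ∈ l.take r, a ∈ A := fun a ha => hlA a (List.mem_of_mem_take ha)
  have hdropA : ∀ a ∈ l.drop r, a ∈ A := fun a ha => hlA a (List.mem_of_mem_drop ha)
  have hp : (l.take r).prod ∈ A ^ r := by
    have := list_prod_mem_pow_length htakeA
    rwa [List.length_take, hl, min_eq_left hr] at this
  refine ⟨(l.take r).prod, hp, le_antisymm ?_ ?_⟩
  · have hrest : (l.take r).prod⁻¹ * x = (l.drop r).prod := by
      rw [inv_mul_eq_iff_eq_mul, ← List.prod_append, List.take_append_drop, hlx]
    have := wordLen_le_length hdropA hrest.symm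
    rw [List.length_drop] at this
    omega
  · have hprefix := (wordLen_le_length htakeA rfl).trans (List.length_take_le r l)
    have := wordLen_mul_le hsym hgen (l.take r).prod ((l.take r).prod⁻¹ * x)
    rw [mul_inv_cancel_left] at this
    omega

lemma exists_mem_pow_wordLen_mul_eq_add
    (hsub : ∀ x : G, ∃ a ∈ A, wordLen A (a * x) = 1 + wordLen A x) (m : ℕ) (x : G) :
    ∃ p ∈ A ^ m, wordLen A (p * x) = m + wordLen A x := by
  induction m with
  | zero => exact ⟨1, by simp, by simp⟩
  | succ m ih =>
    obtain ⟨p, hp, hpx⟩ := ih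
    obtain ⟨a, ha, hapx⟩ := hsub (p * x)
    refine ⟨a * p, by rw [pow_succ']; exact Set.mul_mem_mul ha hp, ?_⟩
    rw [mul_assoc, hapx, hpx]
    ring

lemma mem_pow_mul_iUnion_wordLen_eq_mul (hsym : ∀ a ∈ A, a⁻¹ ∈ A)
    (hgen : Subgroup.closure A = ⊤) (hid : (1 : G) ∈ A)
    (hsub : ∀ x : G, ∃ a ∈ A, wordLen A (a * x) = 1 + wordLen A x)
    {h d : ℕ} (hd : 0 < d) (hdh : d ≤ 2 * h + 1) (x : G) :
    x ∈ A ^ h * ⋃ q : ℕ, {y : G | wordLen A y = d * q} := by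
  have hdiv := Nat.div_add_mod (wordLen A x) d
  have hmod := Nat.mod_lt (wordLen A x) hd
  rcases le_or_gt (wordLen A x % d) h with hrh | hhr
  · obtain ⟨p, hp, hpx⟩ := exists_mem_pow_wordLen_inv_mul_add_eq hsym hgen (Nat.mod_le _ d)
    refine ⟨p, Set.pow_subset_pow_right hid hrh hp, p⁻¹ * x, ?_, mul_inv_cancel_left p x⟩
    exact Set.mem_iUnion.2 ⟨wordLen A x / d, show wordLen A (p⁻¹ * x) = _ by omega⟩
  · obtain ⟨p, hp, hpx⟩ := exists_mem_pow_wordLen_mul_eq_add hsub (d - wordLen A x % d) x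
    have hp' : p⁻¹ ∈ A ^ h :=
      Set.pow_subset_pow_right hid (by omega) (inv_mem_pow_of_mem hsym hp)
    refine ⟨p⁻¹, hp', p * x, Set.mem_iUnion.2 ⟨wordLen A x / d + 1, ?_⟩, inv_mul_cancel_left p x⟩
    rw [Set.mem_ofPred_eq, hpx, Nat.mul_succ]
    omega

end WordLength

theorem stmt3 {G : Type*} [Group G] (A : Set G)
    (hsym : ∀ a ∈ A, a⁻¹ ∈ A) (hgen : Subgroup.closure A = ⊤)
    (hid : (1 : G) ∈ A)
    (hsub : ∀ x : G, ∃ a ∈ A, wordLen A (a * x) = 1 + wordLen A x) (h : ℕ) :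
    A ^ h * (⋃ q : ℕ, {x : G | wordLen A x = (2 * h + 1) * q}) = Set.univ :=
  Set.eq_univ_of_forall <|
    mem_pow_mul_iUnion_wordLen_eq_mul hsym hgen hid hsub (Nat.succ_pos _) le_rfl
end

section
/- Let g be an even integer with g ≥ 2. Every integer n has a representation n = Σ_{i≥0} εᵢ gⁱ where each εᵢ ∈ {0, ±1, ..., ±g/2}, only finitely many εᵢ are nonzero, and whenever |εᵢ| = g/2 one has |ε_{i+1}| < g/2 and εᵢε_{i+1} ≥ 0. -/
/-!
Write `g = 2 * h` and expand greedily: the digit of `n` is its residue modulo `g` taken in `(-h, h]`,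
except when `n ≡ h`, where `±h` are both admissible and the sign is chosen by looking at the next
residue, so that the following digit lies in `[0, h)` after `h` and in `(-h, 0]` after `-h`.
Passing from `n` to `(n - digit) / g` strictly decreases `|n|`, so the expansion terminates.
-/

namespace BalancedExpansion

def digit (h n : ℤ) : ℤ :=
  if n % (2 * h) = h ∧ h ≤ n / (2 * h) % (2 * h) then -h
  else if n % (2 * h) ≤ h then n % (2 * h) else n % (2 * h) - 2 * h

def next (h n : ℤ) : ℤ := (n - digit h n) / (2 * h)

variable {h : ℤ}

lemma two_mul_dvd_sub_digit (n : ℤ) : 2 * h ∣ n - digit h n := by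
  have hn := Int.emod_add_mul_ediv n (2 * h)
  unfold digit
  split_ifs
  · exact ⟨n / (2 * h) + 1, by linarith⟩
  · exact ⟨n / (2 * h), by linarith⟩
  · exact ⟨n / (2 * h) + 1, by linarith⟩

lemma digit_add_two_mul_next (hh : h ≠ 0) (n : ℤ) : digit h n + 2 * h * next h n = n := by
  obtain ⟨c, hc⟩ := two_mul_dvd_sub_digit n
  rw [next, hc, Int.mul_ediv_cancel_left _ (by positivity)]
  linarith

lemma abs_digit_le (hh : 0 < h) (n : ℤ) : |digit h n| ≤ h := by
  have := Int.emod_nonneg n (by positivity : 2 * h ≠ 0)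
  have := Int.emod_lt_of_pos n (by positivity : 0 < 2 * h)
  unfold digit
  split_ifs <;> rw [abs_le] <;> constructor <;> omega

lemma digit_zero (hh : 0 < h) : digit h 0 = 0 := by
  simp [digit, hh.le, hh.ne]

lemma next_zero (hh : 0 < h) : next h 0 = 0 := by
  simp [next, digit_zero hh]

/-- For `h = 1` and `n = ±1` the crude bound below is not strict; the tie-break then gives
`digit 1 n = n`, whereas the other choice would make `next 1 n = n`. -/
lemma natAbs_next_lt (hh : 0 < h) {n : ℤ} (hn : n ≠ 0) : (next h n).natAbs < n.natAbs := by
  by_contra! hle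
  have habs : |n| ≤ |next h n| := by
    simpa only [Int.natCast_natAbs] using (Int.ofNat_le.mpr hle)
  have hpos : 0 < |n| := abs_pos.mpr hn
  have hbound : 2 * h * |next h n| ≤ |n| + h := by
    have hd := abs_digit_le hh n
    calc 2 * h * |next h n| = |n - digit h n| := by
          rw [show n - digit h n = 2 * h * next h n by
              linarith [digit_add_two_mul_next hh.ne' n], abs_mul, abs_of_pos (by positivity : 0 < 2 * h)]
      _ ≤ |n| + |digit h n| := abs_sub _ _
      _ ≤ |n| + h := by linarith
  have h_eq_one : h = 1 := by nlinarith
  have hn1 : n = 1 ∨ n = -1 := by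
    have : |n| = 1 := by nlinarith
    rcases abs_choice n with hn' | hn' <;> [left; right] <;> linarith
  subst h_eq_one
  rcases hn1 with rfl | rfl <;> revert hle <;> decide

lemma iterate_next_eq_zero (hh : 0 < h) {k : ℕ} {n : ℤ} (hk : n.natAbs ≤ k) :
    (next h)^[k] n = 0 := by
  induction k generalizing n with
  | zero => simpa using hk
  | succ k ih =>
    rw [Function.iterate_succ_apply]
    by_cases hn : n = 0
    · rw [hn, next_zero hh, Function.iterate_fixed (next_zero hh)]
    · exact ih (by have := natAbs_next_lt hh hn; omega)


lemma digit_of_emod_lt {n : ℤ} (hr : n % (2 * h) < h) : digit h n = n % (2 * h) := by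
  simp [digit, hr.ne, hr.le]

lemma digit_of_lt_emod {n : ℤ} (hr : h < n % (2 * h)) : digit h n = n % (2 * h) - 2 * h := by
  simp [digit, hr.ne', not_le.mpr hr]

lemma digit_nonneg_lt_of_emod_lt (hh : 0 < h) {n : ℤ} (hr : n % (2 * h) < h) :
    0 ≤ digit h n ∧ digit h n < h := by
  rw [digit_of_emod_lt hr]
  exact ⟨Int.emod_nonneg n (by positivity), hr⟩

lemma neg_lt_digit_add_one_nonpos_of_le_emod (hh : 0 < h) {n : ℤ} (hr : h ≤ n % (2 * h)) :
    -h < digit h (n + 1) ∧ digit h (n + 1) ≤ 0 := by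
  have hlt := Int.emod_lt_of_pos n (by positivity : 0 < 2 * h)
  have hsucc : (n + 1) % (2 * h) = (n % (2 * h) + 1) % (2 * h) := (Int.emod_add_emod ..).symm
  rcases (by omega : n % (2 * h) + 1 < 2 * h ∨ n % (2 * h) + 1 = 2 * h) with hs | hs
  · rw [Int.emod_eq_of_lt (by omega) hs] at hsucc
    rw [digit_of_lt_emod (by omega), hsucc]
    omega
  · rw [hs, Int.emod_self] at hsucc
    rw [digit_of_emod_lt (by omega), hsucc]
    omega

lemma digit_next_of_abs_digit_eq (hh : 0 < h) {n : ℤ} (hd : |digit h n| = h) :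
    |digit h (next h n)| < h ∧ 0 ≤ digit h n * digit h (next h n) := by
  have hdiv := Int.emod_add_mul_ediv n (2 * h)
  have hr : n % (2 * h) = h := by
    have := Int.emod_nonneg n (by positivity : 2 * h ≠ 0)
    have := Int.emod_lt_of_pos n (by positivity : 0 < 2 * h)
    unfold digit at hd
    rw [abs_eq hh.le] at hd
    split_ifs at hd <;> omega
  have hnext := digit_add_two_mul_next hh.ne' n
  by_cases hs : n / (2 * h) % (2 * h) < h
  · have hdh : digit h n = h := by simp [digit, hr, not_le.mpr hs]
    have hq : next h n = n / (2 * h) :=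
      mul_left_cancel₀ (by positivity : 2 * h ≠ 0) (by linarith)
    obtain ⟨h0, h1⟩ := digit_nonneg_lt_of_emod_lt hh hs
    rw [hdh, hq, abs_of_nonneg h0]
    exact ⟨h1, by positivity⟩
  · have hdh : digit h n = -h := by simp [digit, hr, not_lt.mp hs]
    have hq : next h n = n / (2 * h) + 1 :=
      mul_left_cancel₀ (by positivity : 2 * h ≠ 0) (by linarith)
    obtain ⟨h0, h1⟩ := neg_lt_digit_add_one_nonpos_of_le_emod hh (not_lt.mp hs)
    rw [hdh, hq, abs_of_nonpos h1]
    exact ⟨by linarith, by nlinarith⟩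


def expansion (h n : ℤ) (i : ℕ) : ℤ := digit h ((next h)^[i] n)

lemma sum_expansion_add_iterate (hh : h ≠ 0) (n : ℤ) (k : ℕ) :
    ∑ i ∈ Finset.range k, expansion h n i * (2 * h) ^ i + (next h)^[k] n * (2 * h) ^ k = n := by
  induction k with
  | zero => simp
  | succ k ih =>
    rw [Finset.sum_range_succ, Function.iterate_succ_apply', pow_succ, expansion]
    linear_combination ih + (2 * h) ^ k * digit_add_two_mul_next hh ((next h)^[k] n)

lemma expansion_eq_zero (hh : 0 < h) {n : ℤ} {i : ℕ} (hi : n.natAbs ≤ i) : expansion h n i = 0 := by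
  rw [expansion, iterate_next_eq_zero hh hi, digit_zero hh]

lemma support_expansion_subset (hh : 0 < h) (n : ℤ) :
    Function.support (expansion h n) ⊆ Set.Iio n.natAbs := fun _ hi =>
  Set.mem_Iio.mpr (not_le.mp fun hle => hi (expansion_eq_zero hh hle))

lemma finsum_expansion (hh : 0 < h) (n : ℤ) : ∑ᶠ i, expansion h n i * (2 * h) ^ i = n := by
  rw [finsum_eq_sum_of_support_subset _ (s := Finset.range n.natAbs)]
  · simpa [iterate_next_eq_zero hh le_rfl] using sum_expansion_add_iterate hh.ne' n n.natAbs
  · intro i hi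
    simpa using support_expansion_subset hh n (Function.support_mul_subset_left _ _ hi)

lemma abs_expansion_le (hh : 0 < h) (n : ℤ) (i : ℕ) : |expansion h n i| ≤ h :=
  abs_digit_le hh _

lemma expansion_succ_of_abs_eq (hh : 0 < h) {n : ℤ} {i : ℕ} (hi : |expansion h n i| = h) :
    |expansion h n (i + 1)| < h ∧ 0 ≤ expansion h n i * expansion h n (i + 1) := by
  simpa only [expansion, Function.iterate_succ_apply'] using digit_next_of_abs_digit_eq hh hi

end BalancedExpansion

open BalancedExpansion in
theorem stmt5 (g : ℤ) (hg : 2 ≤ g) (hge : Even g) (n : ℤ) :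
    ∃ ε : ℕ → ℤ,
      (∀ i, |ε i| ≤ g / 2) ∧
      (Set.Finite {i | ε i ≠ 0}) ∧
      (∀ i, |ε i| = g / 2 → |ε (i + 1)| < g / 2 ∧ 0 ≤ ε i * ε (i + 1)) ∧
      n = ∑ᶠ i, ε i * g ^ i := by
  obtain ⟨h, rfl⟩ := hge.two_dvd
  have hh : 0 < h := by omega
  rw [Int.mul_ediv_cancel_left h two_ne_zero]
  exact ⟨expansion h n, abs_expansion_le hh n, (Set.finite_Iio _).subset (support_expansion_subset hh n),
    fun i => expansion_succ_of_abs_eq hh, (finsum_expansion hh n).symm⟩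
end

section
/- Let g be an even integer with g ≥ 2. The representation n = Σ_{i≥0} εᵢ gⁱ satisfying: εᵢ ∈ {0, ±1, ..., ±g/2}, finitely many nonzero εᵢ, and (|εᵢ| = g/2 implies |ε_{i+1}| < g/2 and εᵢε_{i+1} ≥ 0), is unique for every integer n. -/
/-!
Comparing two representations digit by digit: the lowest digits are congruent modulo `g` and
both lie in `[-g/2, g/2]`, so they can differ only as `g/2` and `-g/2`. Then the two higher parts
differ by exactly `1`, whereas the side conditions force the next digits to be `0 ≤ b < g/2` and
`-g/2 < b' ≤ 0`, which puts `1 + b - b'` strictly between `0` and `g`, so it cannot be divisible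
by `g`. Cancelling the lowest digit and shifting, induction on the length finishes the proof.
-/

structure IsBalancedDigits (g : ℤ) (ε : ℕ → ℤ) : Prop where
  abs_le : ∀ i, |ε i| ≤ g / 2
  of_abs_eq : ∀ i, |ε i| = g / 2 → |ε (i + 1)| < g / 2 ∧ 0 ≤ ε i * ε (i + 1)

theorem IsBalancedDigits.shift {g : ℤ} {ε : ℕ → ℤ} (h : IsBalancedDigits g ε) :
    IsBalancedDigits g (fun i ↦ ε (i + 1)) :=
  ⟨fun i ↦ h.abs_le (i + 1), fun i ↦ h.of_abs_eq (i + 1)⟩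

/-- `a + g * T` and `a' + g * T'` are two numbers written with lowest digits `a`, `a'` and
next digits `b ≡ T`, `b' ≡ T' [ZMOD g]`. -/
theorem eq_of_add_mul_eq_add_mul {g a a' b b' T T' : ℤ} (hge : Even g)
    (ha : |a| ≤ g / 2) (ha' : |a'| ≤ g / 2)
    (hab : |a| = g / 2 → |b| < g / 2 ∧ 0 ≤ a * b)
    (hab' : |a'| = g / 2 → |b'| < g / 2 ∧ 0 ≤ a' * b')
    (hT : g ∣ T - b) (hT' : g ∣ T' - b') (h : a + g * T = a' + g * T') : a = a' := by
  wlog hle : a' ≤ a generalizing a a' b b' T T'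
  · exact (this ha' ha hab' hab hT' hT h.symm (le_of_not_ge hle)).symm
  obtain ⟨r, rfl⟩ := hge
  have hr : (r + r) / 2 = r := by omega
  rw [hr] at ha ha' hab hab'
  obtain ⟨ha₁, ha₂⟩ := abs_le.mp ha
  obtain ⟨ha₁', ha₂'⟩ := abs_le.mp ha'
  by_contra hne
  have hgap : a - a' - (r + r) = 0 :=
    Int.eq_zero_of_abs_lt_dvd (m := r + r) ⟨T' - T - 1, by linear_combination h⟩
      (abs_lt.mpr ⟨by omega, by omega⟩)
  have hr_pos : 0 < r := by omega
  have hTT' : T' = T + 1 := by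
    have : (r + r) * (T' - T - 1) = 0 := by linear_combination -h + hgap
    rcases mul_eq_zero.mp this with h0 | h0 <;> omega
  obtain rfl : r = a := by omega
  obtain rfl : -r = a' := by omega
  obtain ⟨hb, hab⟩ := hab (abs_of_pos hr_pos)
  obtain ⟨hb', hab'⟩ := hab' (by rw [abs_neg, abs_of_pos hr_pos])
  have hb₀ : 0 ≤ b := (mul_nonneg_iff_of_pos_left hr_pos).mp hab
  have hb₀' : b' ≤ 0 := by nlinarith
  obtain ⟨hb₁, hb₂⟩ := abs_lt.mp hb
  obtain ⟨hb₁', hb₂'⟩ := abs_lt.mp hb'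
  have hcarry : 1 + b - b' = 0 := by
    refine Int.eq_zero_of_abs_lt_dvd (m := r + r) ?_ (abs_lt.mpr ⟨by omega, by omega⟩)
    have := dvd_sub hT' hT
    rwa [hTT', show T + 1 - b' - (T - b) = 1 + b - b' by ring] at this
  omega

theorem dvd_sum_range_mul_pow_sub {R : Type*} [CommRing R] {g : R} {ε : ℕ → R} {N : ℕ}
    (hN : ∀ i, N ≤ i → ε i = 0) :
    g ∣ ∑ i ∈ Finset.range N, ε i * g ^ i - ε 0 := by
  cases N with
  | zero => simp [hN 0 le_rfl]
  | succ N =>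
    rw [Finset.sum_range_succ', pow_zero, mul_one, add_sub_cancel_right]
    exact Finset.dvd_sum fun i _ ↦ dvd_mul_of_dvd_right (dvd_pow_self g i.succ_ne_zero) _

theorem sum_range_succ_mul_pow {R : Type*} [CommSemiring R] (g : R) (ε : ℕ → R) (N : ℕ) :
    ∑ i ∈ Finset.range (N + 1), ε i * g ^ i
      = ε 0 + g * ∑ i ∈ Finset.range N, ε (i + 1) * g ^ i := by
  rw [Finset.sum_range_succ', Finset.mul_sum, add_comm]
  simp only [pow_succ, pow_zero, mul_one]
  congr 1
  exact Finset.sum_congr rfl fun i _ ↦ by ring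

theorem IsBalancedDigits.eq_of_sum_range_eq {g : ℤ} (hg : g ≠ 0) (hge : Even g) {N : ℕ}
    {ε ε' : ℕ → ℤ} (hε : IsBalancedDigits g ε) (hε' : IsBalancedDigits g ε')
    (hN : ∀ i, N ≤ i → ε i = 0) (hN' : ∀ i, N ≤ i → ε' i = 0)
    (h : ∑ i ∈ Finset.range N, ε i * g ^ i = ∑ i ∈ Finset.range N, ε' i * g ^ i) : ε = ε' := by
  induction N generalizing ε ε' with
  | zero => funext i; rw [hN i (Nat.zero_le i), hN' i (Nat.zero_le i)]
  | succ N ih =>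
    rw [sum_range_succ_mul_pow, sum_range_succ_mul_pow] at h
    have hshift : ∀ {δ : ℕ → ℤ}, (∀ i, N + 1 ≤ i → δ i = 0) → ∀ i, N ≤ i → δ (i + 1) = 0 :=
      fun hδ i hi ↦ hδ (i + 1) (by omega)
    have head : ε 0 = ε' 0 :=
      eq_of_add_mul_eq_add_mul hge (hε.abs_le 0) (hε'.abs_le 0) (hε.of_abs_eq 0) (hε'.of_abs_eq 0)
        (dvd_sum_range_mul_pow_sub (hshift hN)) (dvd_sum_range_mul_pow_sub (hshift hN')) h
    have tail : (fun i ↦ ε (i + 1)) = fun i ↦ ε' (i + 1) := by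
      rw [head, add_right_inj] at h
      exact ih hε.shift hε'.shift (hshift hN) (hshift hN') (mul_left_cancel₀ hg h)
    funext i
    cases i with
    | zero => exact head
    | succ i => exact congrFun tail i

theorem exists_forall_ge_eq_zero_of_finite {M : Type*} [Zero M] {ε : ℕ → M}
    (h : {i | ε i ≠ 0}.Finite) : ∃ N, ∀ i, N ≤ i → ε i = 0 := by
  have := h.eventually_cofinite_notMem
  rw [Nat.cofinite_eq_atTop, Filter.eventually_atTop] at this
  simpa using this

theorem finsum_eq_sum_range_of_forall_ge_eq_zero {M : Type*} [AddCommMonoid M] {f : ℕ → M}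
    {N : ℕ} (hN : ∀ i, N ≤ i → f i = 0) : ∑ᶠ i, f i = ∑ i ∈ Finset.range N, f i := by
  refine finsum_eq_sum_of_support_subset f fun i hi ↦ ?_
  by_contra hiN
  exact hi (hN i (by simpa using hiN))

theorem stmt6 (g : ℤ) (hg : 2 ≤ g) (hge : Even g) (n : ℤ)
    (ε ε' : ℕ → ℤ)
    (h1 : ∀ i, |ε i| ≤ g / 2) (h1' : ∀ i, |ε' i| ≤ g / 2)
    (h2 : Set.Finite {i | ε i ≠ 0}) (h2' : Set.Finite {i | ε' i ≠ 0})
    (h3 : ∀ i, |ε i| = g / 2 → |ε (i + 1)| < g / 2 ∧ 0 ≤ ε i * ε (i + 1))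
    (h3' : ∀ i, |ε' i| = g / 2 → |ε' (i + 1)| < g / 2 ∧ 0 ≤ ε' i * ε' (i + 1))
    (h4 : n = ∑ᶠ i, ε i * g ^ i) (h4' : n = ∑ᶠ i, ε' i * g ^ i) :
    ε = ε' := by
  obtain ⟨N₁, hN₁⟩ := exists_forall_ge_eq_zero_of_finite h2
  obtain ⟨N₂, hN₂⟩ := exists_forall_ge_eq_zero_of_finite h2'
  have hN : ∀ i, max N₁ N₂ ≤ i → ε i = 0 := fun i hi ↦ hN₁ i (le_of_max_le_left hi)
  have hN' : ∀ i, max N₁ N₂ ≤ i → ε' i = 0 := fun i hi ↦ hN₂ i (le_of_max_le_right hi)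
  have hmul : ∀ {δ : ℕ → ℤ}, (∀ i, max N₁ N₂ ≤ i → δ i = 0) →
      ∀ i, max N₁ N₂ ≤ i → δ i * g ^ i = 0 := fun hδ i hi ↦ by rw [hδ i hi, zero_mul]
  refine IsBalancedDigits.eq_of_sum_range_eq (by omega) hge ⟨h1, h3⟩ ⟨h1', h3'⟩ hN hN' ?_
  rw [← finsum_eq_sum_range_of_forall_ge_eq_zero (hmul hN),
    ← finsum_eq_sum_range_of_forall_ge_eq_zero (hmul hN'), ← h4, ← h4']
end

section
/- Let g be an odd integer with g ≥ 3, and let ℓ_g(n) be the word length of n with respect to A_g = {0} ∪ {±gⁱ : i ≥ 0} in the additive group ℤ. If n = Σ_{i≥0} εᵢ gⁱ is the balanced representation with εᵢ ∈ {0, ±1, ..., ±(g−1)/2} and finitely many εᵢ nonzero, then ℓ_g(n) = Σ_{i≥0} |εᵢ|. -/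
/-!
Every element of `A_g` is `δ * g ^ i` with `|δ| ≤ 1`. Adding such an element to `n` changes the
balanced digit sum of `n` by at most one: only the digit at position `i` moves, and if it leaves
the balanced range it wraps around to a digit of the same absolute value and carries `±1` into
position `i + 1`, where the same argument applies. Hence the balanced digit sum is a lower
bound for `ℓ_g`, and the balanced representation itself, read as a list of `±gⁱ`, attains it.
-/

def Ag (g : ℤ) : Set ℤ := {0} ∪ {x | ∃ i : ℕ, x = g ^ i ∨ x = -g ^ i}

noncomputable def lg (g : ℤ) (n : ℤ) : ℕ :=
  sInf {h | ∃ l : List ℤ, (∀ a ∈ l, a ∈ Ag g) ∧ l.sum = n ∧ l.length = h}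

lemma Int.natAbs_bdiv_lt {g : ℕ} {n : ℤ} (hg : 3 ≤ g) (hn : n ≠ 0) :
    (n.bdiv g).natAbs < n.natAbs := by
  have hdecomp := Int.bmod_add_bdiv n g
  have hlo := Int.le_bmod (x := n) (m := g) (by omega)
  have hhi := Int.bmod_lt (x := n) (m := g) (by omega)
  generalize n.bdiv g = q at *
  generalize n.bmod g = r at *
  have hgq : (q < 0 ∧ (g : ℤ) * q - q ≤ -(g - 1)) ∨ q = 0 ∨
      (0 < q ∧ g - 1 ≤ (g : ℤ) * q - q) := by
    rcases lt_trichotomy q 0 with hq | hq | hq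
    · left; exact ⟨hq, by nlinarith⟩
    · simp [hq]
    · right; right; exact ⟨hq, by nlinarith⟩
  omega

/-- The guard `g < 3` only makes the recursion terminate; for such `g` the value is junk. -/
def balancedDigitSum (g : ℕ) (n : ℤ) : ℕ :=
  if n = 0 ∨ g < 3 then 0
  else (n.bmod g).natAbs + balancedDigitSum g (n.bdiv g)
termination_by n.natAbs
decreasing_by
  rename_i h
  push Not at h
  exact Int.natAbs_bdiv_lt h.2 h.1

section BalancedDigits

variable {g : ℕ}

lemma bmod_bdiv_mul_add_of_abs_le (hgo : Odd g) {q r : ℤ} (hr : |r| ≤ ((g : ℤ) - 1) / 2) :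
    (g * q + r).bmod g = r ∧ (g * q + r).bdiv g = q := by
  obtain ⟨k, rfl⟩ := hgo
  have hbmod : (((2 * k + 1 : ℕ) : ℤ) * q + r).bmod (2 * k + 1) = r := by
    rw [Int.mul_add_bmod_self_left]
    rw [abs_le] at hr
    exact Int.bmod_eq_of_le (by push_cast at hr ⊢; omega) (by push_cast at hr ⊢; omega)
  refine ⟨hbmod, ?_⟩
  have h := Int.bmod_add_bdiv (((2 * k + 1 : ℕ) : ℤ) * q + r) (2 * k + 1)
  rw [hbmod] at h
  exact mul_left_cancel₀ (a := ((2 * k + 1 : ℕ) : ℤ)) (by omega) (by linarith)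

@[simp]
lemma balancedDigitSum_zero : balancedDigitSum g 0 = 0 := by
  simp [balancedDigitSum]

lemma balancedDigitSum_mul_add (hg : 3 ≤ g) (hgo : Odd g) {q r : ℤ}
    (hr : |r| ≤ ((g : ℤ) - 1) / 2) :
    balancedDigitSum g (g * q + r) = r.natAbs + balancedDigitSum g q := by
  obtain ⟨hbmod, hbdiv⟩ := bmod_bdiv_mul_add_of_abs_le hgo hr
  by_cases hn : (g : ℤ) * q + r = 0
  · have hr0 : r = 0 := by rw [hn, Int.zero_bmod] at hbmod; exact hbmod.symm
    have hq0 : q = 0 := by simpa [hr0, show g ≠ 0 by omega] using hn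
    simp [hr0, hq0]
  · rw [balancedDigitSum, if_neg (by omega), hbmod, hbdiv]

lemma abs_bmod_le (hgo : Odd g) (n : ℤ) : |n.bmod g| ≤ ((g : ℤ) - 1) / 2 := by
  obtain ⟨k, rfl⟩ := hgo
  have hlo := Int.le_bmod (x := n) (m := 2 * k + 1) (by omega)
  have hhi := Int.bmod_lt (x := n) (m := 2 * k + 1) (by omega)
  rw [abs_le]
  push_cast at hlo hhi ⊢
  omega

lemma balancedDigitSum_eq (hg : 3 ≤ g) (hgo : Odd g) (n : ℤ) :
    balancedDigitSum g n = (n.bmod g).natAbs + balancedDigitSum g (n.bdiv g) := by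
  conv_lhs => rw [← Int.bdiv_add_bmod n g]
  exact balancedDigitSum_mul_add hg hgo (abs_bmod_le hgo n)

lemma balancedDigitSum_add_le (hg : 3 ≤ g) (hgo : Odd g) {δ : ℤ} (hδ : |δ| ≤ 1) (n : ℤ) :
    balancedDigitSum g (n + δ) ≤ balancedDigitSum g n + 1 := by
  induction hN : n.natAbs using Nat.strong_induction_on generalizing n with
  | _ N ih =>
    subst hN
    have hr := abs_bmod_le hgo n
    have hlt := Int.natAbs_bdiv_lt hg (n := n)
    have hr0 : n = 0 → n.bmod g = 0 := by rintro rfl; exact Int.zero_bmod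
    rw [balancedDigitSum_eq hg hgo n]
    have hn := (Int.bdiv_add_bmod n g).symm
    generalize n.bdiv g = q at *
    generalize n.bmod g = r at *
    subst hn
    obtain ⟨k, hk⟩ := hgo
    have hhalf : ((g : ℤ) - 1) / 2 = k := by omega
    rw [hhalf, abs_le] at hr
    rw [abs_le] at hδ
    by_cases hrδ : |r + δ| ≤ k
    · rw [add_assoc, balancedDigitSum_mul_add hg ⟨k, hk⟩ (hhalf ▸ hrδ)]
      rw [abs_le] at hrδ
      omega
    · rw [abs_le] at hrδ
      have hq := ih _ (hlt (by omega)) q rfl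
      -- the digit `±(k + 1)` wraps around to `∓k` and carries `δ` into `q`
      obtain ⟨rfl, rfl⟩ | ⟨rfl, rfl⟩ : (δ = 1 ∧ r = k) ∨ (δ = -1 ∧ r = -k) := by omega
      · have hk' : |(-k : ℤ)| ≤ ((g : ℤ) - 1) / 2 := by
          rw [hhalf, abs_neg, abs_of_nonneg (by omega)]
        rw [show (g : ℤ) * q + k + 1 = g * (q + 1) + -k by push_cast [hk]; ring,
          balancedDigitSum_mul_add hg ⟨k, hk⟩ hk']
        omega
      · have hk' : |(k : ℤ)| ≤ ((g : ℤ) - 1) / 2 := by rw [hhalf, abs_of_nonneg (by omega)]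
        rw [show (g : ℤ) * q + -k + -1 = g * (q + -1) + k by push_cast [hk]; ring,
          balancedDigitSum_mul_add hg ⟨k, hk⟩ hk']
        omega

lemma balancedDigitSum_add_mul_pow_le (hg : 3 ≤ g) (hgo : Odd g) {δ : ℤ} (hδ : |δ| ≤ 1)
    (i : ℕ) (n : ℤ) :
    balancedDigitSum g (n + δ * g ^ i) ≤ balancedDigitSum g n + 1 := by
  induction i generalizing n with
  | zero => simpa using balancedDigitSum_add_le hg hgo hδ n
  | succ i ih =>
    have hn := (Int.bdiv_add_bmod n g).symm
    rw [show n + δ * g ^ (i + 1) = g * (n.bdiv g + δ * g ^ i) + n.bmod g by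
        conv_lhs => rw [hn]
        ring,
      balancedDigitSum_mul_add hg hgo (abs_bmod_le hgo n), balancedDigitSum_eq hg hgo n]
    have := ih (n.bdiv g)
    omega

lemma exists_eq_mul_pow_of_mem_Ag {g a : ℤ} (ha : a ∈ Ag g) :
    ∃ δ : ℤ, ∃ i : ℕ, |δ| ≤ 1 ∧ a = δ * g ^ i := by
  rcases ha with rfl | ⟨i, rfl | rfl⟩
  · exact ⟨0, 0, by simp⟩
  · exact ⟨1, i, by simp⟩
  · exact ⟨-1, i, by simp⟩

lemma balancedDigitSum_list_sum_le (hg : 3 ≤ g) (hgo : Odd g) {l : List ℤ}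
    (hl : ∀ a ∈ l, a ∈ Ag g) : balancedDigitSum g l.sum ≤ l.length := by
  induction l with
  | nil => simp
  | cons a l ih =>
    obtain ⟨δ, i, hδ, rfl⟩ := exists_eq_mul_pow_of_mem_Ag (hl a List.mem_cons_self)
    rw [List.sum_cons, add_comm, List.length_cons]
    have := balancedDigitSum_add_mul_pow_le hg hgo hδ i l.sum
    have := ih fun b hb => hl b (List.mem_cons_of_mem _ hb)
    omega

lemma balancedDigitSum_sum_range (hg : 3 ≤ g) (hgo : Odd g) {ε : ℕ → ℤ}
    (hε : ∀ i, |ε i| ≤ ((g : ℤ) - 1) / 2) (N : ℕ) :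
    balancedDigitSum g (∑ i ∈ Finset.range N, ε i * g ^ i) =
      ∑ i ∈ Finset.range N, (ε i).natAbs := by
  induction N generalizing ε with
  | zero => simp
  | succ N ih =>
    rw [Finset.sum_range_succ', Finset.sum_range_succ',
      show ∑ i ∈ Finset.range N, ε (i + 1) * (g : ℤ) ^ (i + 1) + ε 0 * (g : ℤ) ^ 0
        = g * ∑ i ∈ Finset.range N, ε (i + 1) * (g : ℤ) ^ i + ε 0 by
          rw [Finset.mul_sum, pow_zero, mul_one]
          exact congrArg (· + ε 0) (Finset.sum_congr rfl fun i _ => by ring),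
      balancedDigitSum_mul_add hg hgo (hε 0), ih fun i => hε (i + 1), add_comm]

end BalancedDigits

section WordLength

variable {g : ℤ}

lemma lg_le_length {l : List ℤ} (hl : ∀ a ∈ l, a ∈ Ag g) : lg g l.sum ≤ l.length :=
  Nat.sInf_le ⟨l, hl, rfl, rfl⟩

lemma exists_list_sum_eq_length_eq_natAbs (g n : ℤ) :
    ∃ l : List ℤ, (∀ a ∈ l, a ∈ Ag g) ∧ l.sum = n ∧ l.length = n.natAbs := by
  refine ⟨List.replicate n.natAbs n.sign, fun a ha => ?_, ?_, List.length_replicate⟩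
  · rw [List.eq_of_mem_replicate ha]
    rcases Int.sign_trichotomy n with h | h | h <;> rw [h]
    · exact Or.inr ⟨0, by simp⟩
    · exact Or.inl rfl
    · exact Or.inr ⟨0, by simp⟩
  · rw [List.sum_replicate, nsmul_eq_mul, mul_comm, Int.sign_mul_natAbs]

lemma exists_list_sum_eq_length_eq_lg (g n : ℤ) :
    ∃ l : List ℤ, (∀ a ∈ l, a ∈ Ag g) ∧ l.sum = n ∧ l.length = lg g n :=
  Nat.sInf_mem (s := {h | ∃ l : List ℤ, (∀ a ∈ l, a ∈ Ag g) ∧ l.sum = n ∧ l.length = h})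
    ⟨_, exists_list_sum_eq_length_eq_natAbs g n⟩

lemma lg_le_natAbs (n : ℤ) : lg g n ≤ n.natAbs := by
  obtain ⟨l, hl, rfl, hlen⟩ := exists_list_sum_eq_length_eq_natAbs g n
  exact hlen ▸ lg_le_length hl

lemma lg_add_le (a b : ℤ) : lg g (a + b) ≤ lg g a + lg g b := by
  obtain ⟨l, hl, rfl, hl'⟩ := exists_list_sum_eq_length_eq_lg g a
  obtain ⟨m, hm, rfl, hm'⟩ := exists_list_sum_eq_length_eq_lg g b
  rw [← hl', ← hm', ← List.sum_append, ← List.length_append]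
  exact lg_le_length fun x hx => (List.mem_append.mp hx).elim (hl x) (hm x)

lemma lg_mul_le (n : ℤ) : lg g (g * n) ≤ lg g n := by
  obtain ⟨l, hl, rfl, hlen⟩ := exists_list_sum_eq_length_eq_lg g n
  rw [← hlen, ← List.length_map (f := (g * ·)),
    show g * l.sum = (l.map (g * ·)).sum by rw [List.sum_map_mul_left, List.map_id']]
  refine lg_le_length fun a ha => ?_
  obtain ⟨b, hb, rfl⟩ := List.mem_map.mp ha
  rcases hl b hb with rfl | ⟨i, rfl | rfl⟩
  · exact Or.inl (mul_zero g)
  · exact Or.inr ⟨i + 1, Or.inl (pow_succ' g i).symm⟩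
  · exact Or.inr ⟨i + 1, Or.inr (by simp [pow_succ'])⟩

end WordLength

section Main

variable {g : ℕ}

lemma lg_le_balancedDigitSum (hg : 3 ≤ g) (hgo : Odd g) (n : ℤ) :
    lg g n ≤ balancedDigitSum g n := by
  induction hN : n.natAbs using Nat.strong_induction_on generalizing n with
  | _ N ih =>
    subst hN
    by_cases hn : n = 0
    · simpa [hn] using lg_le_natAbs (g := g) 0
    calc lg g n = lg g (n.bmod g + g * n.bdiv g) := by rw [Int.bmod_add_bdiv]
      _ ≤ lg g (n.bmod g) + lg g (g * n.bdiv g) := lg_add_le _ _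
      _ ≤ (n.bmod g).natAbs + lg g (n.bdiv g) :=
        add_le_add (lg_le_natAbs _) (lg_mul_le _)
      _ ≤ (n.bmod g).natAbs + balancedDigitSum g (n.bdiv g) :=
        Nat.add_le_add_left (ih _ (Int.natAbs_bdiv_lt hg hn) _ rfl) _
      _ = balancedDigitSum g n := (balancedDigitSum_eq hg hgo n).symm

theorem lg_eq_balancedDigitSum (hg : 3 ≤ g) (hgo : Odd g) (n : ℤ) :
    lg g n = balancedDigitSum g n := by
  refine le_antisymm (lg_le_balancedDigitSum hg hgo n) ?_
  obtain ⟨l, hl, rfl, hlen⟩ := exists_list_sum_eq_length_eq_lg g n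
  exact hlen ▸ balancedDigitSum_list_sum_le hg hgo hl

lemma balancedDigitSum_finsum (hg : 3 ≤ g) (hgo : Odd g) {ε : ℕ → ℤ}
    (hε : ∀ i, |ε i| ≤ ((g : ℤ) - 1) / 2) (hfin : {i | ε i ≠ 0}.Finite) :
    (balancedDigitSum g (∑ᶠ i, ε i * g ^ i) : ℤ) = ∑ᶠ i, |ε i| := by
  obtain ⟨N, hN⟩ := Finset.exists_nat_subset_range hfin.toFinset
  have hsupp : Function.support ε ⊆ Finset.range N := fun i hi =>
    hN (hfin.mem_toFinset.mpr hi)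
  rw [finsum_eq_sum_of_support_subset _ ((Function.support_mul_subset_left _ _).trans hsupp),
    finsum_eq_sum_of_support_subset (fun i => |ε i|)
      ((Function.support_comp_eq abs (by simp) _).le.trans hsupp),
    balancedDigitSum_sum_range hg hgo hε]
  push_cast [Int.natCast_natAbs]
  rfl

end Main

theorem stmt10 (g : ℤ) (hg : 3 ≤ g) (hgo : Odd g) (n : ℤ) (ε : ℕ → ℤ)
    (h1 : ∀ i, |ε i| ≤ (g - 1) / 2)
    (h2 : Set.Finite {i | ε i ≠ 0})
    (h4 : n = ∑ᶠ i, ε i * g ^ i) :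
    (lg g n : ℤ) = ∑ᶠ i, |ε i| := by
  lift g to ℕ using by omega
  rw [Int.odd_coe_nat] at hgo
  rw [h4, lg_eq_balancedDigitSum (by omega) hgo]
  exact balancedDigitSum_finsum (by omega) hgo h1 h2
end

section
/- Let f : ℤ → ℤ be defined on nonadjacent forms by f(Σ_{i=0}^{h−1} ε_{kᵢ} 2^{kᵢ}) = Σ_{i=0}^{h−1} ε_{kᵢ} 3^{kᵢ − i}, where k₀ < k₁ < ⋯ < k_{h−1} with k_i − k_{i−1} ≥ 2 and ε_{kᵢ} = ±1. Then f is a bijection from ℤ to ℤ and ℓ₂(n) = ℓ₃(f(n)) for all n ∈ ℤ; i.e., f preserves word length with respect to A₂ and A₃ respectively. -/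
/-- Positions of a signed-digit expansion: `d = 2` for nonadjacent forms, `d = 1` for balanced
ternary. -/
def Spaced {m : ℕ} (d : ℕ) (k : Fin m → ℕ) : Prop :=
  ∀ i j : Fin m, (i : ℕ) < j → k i + d ≤ k j

namespace Spaced

variable {m d : ℕ}

theorem le_succ {k : Fin (m + 1) → ℕ} (hk : Spaced d k) (i : Fin m) : k 0 + d ≤ k i.succ :=
  hk 0 i.succ (Nat.succ_pos i)

theorem tail {k : Fin (m + 1) → ℕ} (hk : Spaced d k) :
    Spaced d (fun i : Fin m => k i.succ - k 0 - d) := fun i j hij => by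
  dsimp only
  have := hk i.succ j.succ (by simpa using hij)
  have := hk.le_succ i
  omega

theorem add_const {k : Fin m → ℕ} (hk : Spaced d k) (c : ℕ) : Spaced d (fun i => k i + c) :=
  fun i j hij => by dsimp only; have := hk i j hij; omega

theorem cons_zero {k : Fin m → ℕ} (hk : Spaced d k) :
    Spaced d (Fin.cons 0 (fun i => k i + d) : Fin (m + 1) → ℕ) := by
  intro i j hij
  cases j using Fin.cases with
  | zero => exact absurd hij (Nat.not_lt_zero _)
  | succ j =>
    cases i using Fin.cases with
    | zero => simp
    | succ i => simpa using hk i j (by simpa using hij)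

theorem add_index {k : Fin m → ℕ} (hk : Spaced d k) : Spaced (d + 1) (fun i => k i + i) :=
  fun i j hij => by dsimp only; have := hk i j hij; omega

theorem add_le {k : Fin m → ℕ} (hk : Spaced (d + 1) k) {i j : Fin m} (hij : (i : ℕ) ≤ j) :
    k i + (j - i) ≤ k j := by
  obtain ⟨n, hn⟩ := Nat.exists_eq_add_of_le hij
  induction n generalizing j with
  | zero => rw [Fin.ext (a := j) (b := i) (by simpa using hn)]; omega
  | succ n ih =>
    have hj' : (i : ℕ) + n < m := by omega
    have := ih (j := ⟨i + n, hj'⟩) (Nat.le_add_right _ _) rfl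
    have := hk ⟨i + n, hj'⟩ j (show (i : ℕ) + n < j by omega)
    dsimp only at *
    omega

theorem index_le {k : Fin m → ℕ} (hk : Spaced (d + 1) k) (i : Fin m) : (i : ℕ) ≤ k i := by
  have := hk.add_le (i := ⟨0, i.pos⟩) (j := i) (Nat.zero_le _)
  dsimp only at this
  omega

theorem sub_index {k : Fin m → ℕ} (hk : Spaced (d + 1) k) : Spaced d (fun i => k i - i) := by
  intro i j hij
  have hj' : (j : ℕ) - 1 < m := by omega
  have := hk.add_le (i := i) (j := ⟨j - 1, hj'⟩) (show (i : ℕ) ≤ j - 1 by omega)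
  have := hk ⟨j - 1, hj'⟩ j (show (j : ℕ) - 1 < j by omega)
  have := hk.index_le i
  dsimp only at *
  omega

end Spaced

section SignedExpansion

variable {R : Type*} [CommSemiring R] {m d : ℕ}

theorem sum_mul_pow_add (b : R) (ε : Fin m → R) (k : Fin m → ℕ) (c : ℕ) :
    ∑ i, ε i * b ^ (k i + c) = b ^ c * ∑ i, ε i * b ^ k i := by
  rw [Finset.mul_sum]
  exact Finset.sum_congr rfl fun i _ => by ring

theorem sum_cons_mul_pow (b r : R) (ε : Fin m → R) (k : Fin m → ℕ) :
    ∑ i, (Fin.cons r ε : Fin (m + 1) → R) i * b ^ (Fin.cons 0 k : Fin (m + 1) → ℕ) i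
      = r + ∑ i, ε i * b ^ k i := by
  simp [Fin.sum_univ_succ]

theorem Spaced.sum_mul_pow_eq {k : Fin (m + 1) → ℕ} (hk : Spaced d k) (b : R)
    (ε : Fin (m + 1) → R) :
    ∑ i, ε i * b ^ k i
      = b ^ k 0 * (ε 0 + b ^ d * ∑ i : Fin m, ε i.succ * b ^ (k i.succ - k 0 - d)) := by
  have hk' : ∀ i : Fin m, k i.succ = (k i.succ - k 0 - d) + (k 0 + d) := fun i => by
    have := hk.le_succ i
    omega
  calc ∑ i, ε i * b ^ k i
      = ε 0 * b ^ k 0 + ∑ i : Fin m, ε i.succ * b ^ ((k i.succ - k 0 - d) + (k 0 + d)) := by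
        rw [Fin.sum_univ_succ]
        exact congrArg _ (Finset.sum_congr rfl fun i _ => by rw [← hk' i])
    _ = _ := by rw [sum_mul_pow_add, pow_add]; ring

end SignedExpansion

theorem Int.eq_of_pow_mul_eq_pow_mul {b u v : ℤ} {i j : ℕ} (hb : b ≠ 0) (hu : ¬ b ∣ u)
    (hv : ¬ b ∣ v) (h : b ^ i * u = b ^ j * v) : i = j := by
  wlog hij : i ≤ j generalizing i j u v
  · exact (this hv hu h.symm (le_of_not_ge hij)).symm
  obtain ⟨c, rfl⟩ := Nat.exists_eq_add_of_le hij
  rw [pow_add, mul_assoc] at h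
  obtain rfl : u = b ^ c * v := mul_left_cancel₀ (pow_ne_zero _ hb) h
  cases c with
  | zero => rfl
  | succ c => exact absurd (Dvd.dvd.mul_right (dvd_pow_self b c.succ_ne_zero) v) hu

theorem Spaced.eq_of_sum_mul_pow_eq {m d : ℕ} {b : ℤ} (hb : 2 ≤ b) (hbd : 2 < b ^ d)
    {k k' : Fin m → ℕ} {ε ε' : Fin m → ℤ} (hk : Spaced d k) (hk' : Spaced d k')
    (hε : ∀ i, ε i = 1 ∨ ε i = -1) (hε' : ∀ i, ε' i = 1 ∨ ε' i = -1)
    (h : ∑ i, ε i * b ^ k i = ∑ i, ε' i * b ^ k' i) : k = k' ∧ ε = ε' := by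
  induction m with
  | zero => exact ⟨funext (·.elim0), funext (·.elim0)⟩
  | succ m ih =>
    rw [hk.sum_mul_pow_eq, hk'.sum_mul_pow_eq] at h
    set q := ∑ i : Fin m, ε i.succ * b ^ (k i.succ - k 0 - d)
    set q' := ∑ i : Fin m, ε' i.succ * b ^ (k' i.succ - k' 0 - d)
    have hd : d ≠ 0 := by rintro rfl; norm_num at hbd
    -- `k 0` is the `b`-adic valuation of the sum; the leading digit is then fixed mod `b ^ d > 2`.
    have not_dvd : ∀ s x : ℤ, (s = 1 ∨ s = -1) → ¬ b ∣ s + b ^ d * x := fun s x hs hdvd => by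
      have hs' : b ∣ s := (dvd_add_left (Dvd.dvd.mul_right (dvd_pow_self b hd) x)).mp hdvd
      have : b ∣ 1 := by rcases hs with rfl | rfl; exacts [hs', dvd_neg.mp hs']
      have := Int.eq_one_of_dvd_one (by omega) this
      omega
    have hk0 : k 0 = k' 0 :=
      Int.eq_of_pow_mul_eq_pow_mul (by omega) (not_dvd _ _ (hε 0)) (not_dvd _ _ (hε' 0)) h
    rw [hk0] at h
    have hb0 : b ≠ 0 := by omega
    have h1 := mul_left_cancel₀ (pow_ne_zero _ hb0) h
    have he0 : ε 0 = ε' 0 := by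
      refine sub_eq_zero.mp
        (Int.eq_zero_of_abs_lt_dvd (m := b ^ d) ⟨q' - q, by linear_combination h1⟩ ?_)
      rcases hε 0 with h | h <;> rcases hε' 0 with h' | h' <;> rw [h, h'] <;> norm_num <;> linarith
    have hq : q = q' := mul_left_cancel₀ (pow_ne_zero d hb0) (by linear_combination h1 - he0)
    obtain ⟨hkt, hεt⟩ := ih hk.tail hk'.tail (fun i => hε i.succ) (fun i => hε' i.succ) hq
    refine ⟨funext (Fin.cases hk0 fun i => ?_), funext (Fin.cases he0 (congrFun hεt))⟩
    have := congrFun hkt i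
    have := hk.le_succ i
    have := hk'.le_succ i
    omega

theorem Int.exists_eq_three_mul_add (x : ℤ) : ∃ q r : ℤ, r.natAbs ≤ 1 ∧ x = 3 * q + r :=
  ⟨(x + 1) / 3, x - 3 * ((x + 1) / 3), by omega, by ring⟩

theorem Int.exists_eq_two_mul_or_four_mul_add (x : ℤ) :
    (∃ y, x = 2 * y) ∨ ∃ q r : ℤ, (r = 1 ∨ r = -1) ∧ x = 4 * q + r := by
  rcases Int.emod_two_eq_zero_or_one x with h | h
  · exact .inl ⟨x / 2, by omega⟩
  · exact .inr ⟨(x + 1) / 4, x - 4 * ((x + 1) / 4), by omega, by ring⟩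

def ternaryWeight (n : ℤ) : ℕ :=
  if n = 0 then 0 else (n.bmod 3).natAbs + ternaryWeight ((n - n.bmod 3) / 3)
termination_by n.natAbs
decreasing_by simp only [Int.bmod]; split <;> omega

theorem ternaryWeight_zero : ternaryWeight 0 = 0 := by
  rw [ternaryWeight, if_pos rfl]

theorem ternaryWeight_three_mul_add (q r : ℤ) (hr : r.natAbs ≤ 1) :
    ternaryWeight (3 * q + r) = ternaryWeight q + r.natAbs := by
  have hbmod : (3 * q + r).bmod 3 = r := by simp only [Int.bmod]; split <;> omega
  rw [ternaryWeight, hbmod]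
  split_ifs with h
  · obtain ⟨rfl, rfl⟩ : q = 0 ∧ r = 0 := by omega
    rw [ternaryWeight_zero, Int.natAbs_zero]
  · rw [show (3 * q + r - r) / 3 = q by omega, add_comm]

theorem ternaryWeight_three_pow_mul (a : ℕ) (x : ℤ) :
    ternaryWeight (3 ^ a * x) = ternaryWeight x := by
  induction a with
  | zero => rw [pow_zero, one_mul]
  | succ a ih =>
    rw [pow_succ, mul_comm _ 3, mul_assoc, ← ih]
    simpa using ternaryWeight_three_mul_add (3 ^ a * x) 0 zero_le_one

theorem ternaryWeight_add_sign_le (x s : ℤ) (hs : s = 1 ∨ s = -1) :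
    ternaryWeight (x + s) ≤ ternaryWeight x + 1 := by
  obtain ⟨q, r, hr, rfl⟩ := Int.exists_eq_three_mul_add x
  rw [ternaryWeight_three_mul_add q r hr]
  by_cases hrs : (r + s).natAbs ≤ 1
  · rw [add_assoc, ternaryWeight_three_mul_add q _ hrs]
    omega
  · -- here `r = s`, and the digit `2 * s` becomes `-s` with a carry `s`
    have := ternaryWeight_add_sign_le q s hs
    rw [show 3 * q + r + s = 3 * (q + s) + -s by omega, ternaryWeight_three_mul_add _ _ (by omega)]
    omega
termination_by x.natAbs
decreasing_by omega

theorem ternaryWeight_add_sign_mul_pow_le (x s : ℤ) (hs : s = 1 ∨ s = -1) (i : ℕ) :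
    ternaryWeight (x + s * 3 ^ i) ≤ ternaryWeight x + 1 := by
  induction i generalizing x with
  | zero => simpa using ternaryWeight_add_sign_le x s hs
  | succ i ih =>
    obtain ⟨q, r, hr, rfl⟩ := Int.exists_eq_three_mul_add x
    rw [show 3 * q + r + s * 3 ^ (i + 1) = 3 * (q + s * 3 ^ i) + r by ring,
      ternaryWeight_three_mul_add _ _ hr, ternaryWeight_three_mul_add _ _ hr]
    have := ih q
    omega

theorem Spaced.ternaryWeight_sum {m : ℕ} {t : Fin m → ℕ} {ε : Fin m → ℤ} (ht : Spaced 1 t)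
    (hε : ∀ i, ε i = 1 ∨ ε i = -1) : ternaryWeight (∑ i, ε i * 3 ^ t i) = m := by
  induction m with
  | zero => simp [ternaryWeight_zero]
  | succ m ih =>
    have h0 : (ε 0).natAbs = 1 := by rcases hε 0 with h | h <;> simp [h]
    rw [ht.sum_mul_pow_eq, ternaryWeight_three_pow_mul, pow_one, add_comm (ε 0),
      ternaryWeight_three_mul_add _ _ h0.le, ih ht.tail fun i => hε i.succ, h0]

theorem exists_balancedTernary (n : ℤ) : ∃ (m : ℕ) (t : Fin m → ℕ) (ε : Fin m → ℤ),
    Spaced 1 t ∧ (∀ i, ε i = 1 ∨ ε i = -1) ∧ ∑ i, ε i * 3 ^ t i = n := by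
  by_cases hn : n = 0
  · exact ⟨0, Fin.elim0, Fin.elim0, (·.elim0), (·.elim0), by simp [hn]⟩
  obtain ⟨q, r, hr, rfl⟩ := Int.exists_eq_three_mul_add n
  obtain ⟨m, t, ε, ht, hε, rfl⟩ := exists_balancedTernary q
  by_cases hr0 : r = 0
  · exact ⟨m, fun i => t i + 1, ε, ht.add_const 1, hε, by rw [sum_mul_pow_add, hr0]; ring⟩
  · refine ⟨m + 1, Fin.cons 0 fun i => t i + 1, Fin.cons r ε, ht.cons_zero, fun i => ?_,
      by rw [sum_cons_mul_pow, sum_mul_pow_add]; ring⟩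
    cases i using Fin.cases
    · simp only [Fin.cons_zero]; omega
    · simpa using hε _
termination_by n.natAbs
decreasing_by omega

-- An odd `n` has last NAF digit `n.bmod 4 = ±1`, and the digit after it is zero.
def nafWeight (n : ℤ) : ℕ :=
  if n = 0 then 0
  else if n % 2 = 0 then nafWeight (n / 2)
  else nafWeight ((n - n.bmod 4) / 4) + 1
termination_by n.natAbs
decreasing_by
  · omega
  · simp only [Int.bmod]; split <;> omega

theorem nafWeight_zero : nafWeight 0 = 0 := by
  rw [nafWeight, if_pos rfl]

theorem nafWeight_two_mul (q : ℤ) : nafWeight (2 * q) = nafWeight q := by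
  rw [nafWeight]
  split_ifs with h
  · obtain rfl : q = 0 := by omega
    rw [nafWeight_zero]
  · rw [Int.mul_ediv_cancel_left q two_ne_zero]
  · omega

theorem nafWeight_four_mul_add (q r : ℤ) (hr : r = 1 ∨ r = -1) :
    nafWeight (4 * q + r) = nafWeight q + 1 := by
  have hbmod : (4 * q + r).bmod 4 = r := by simp only [Int.bmod]; split <;> omega
  rw [nafWeight, hbmod, if_neg (by omega), if_neg (by omega),
    show (4 * q + r - r) / 4 = q by omega]

theorem nafWeight_two_pow_mul (a : ℕ) (x : ℤ) : nafWeight (2 ^ a * x) = nafWeight x := by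
  induction a with
  | zero => rw [pow_zero, one_mul]
  | succ a ih => rw [pow_succ, mul_comm _ 2, mul_assoc, nafWeight_two_mul, ih]

theorem nafWeight_two_mul_add_sign (y s : ℤ) (hs : s = 1 ∨ s = -1) :
    nafWeight y ≤ nafWeight (2 * y + s) ∧ nafWeight (2 * y + s) ≤ nafWeight y + 1 := by
  rcases Int.emod_two_eq_zero_or_one y with h | h
  · obtain ⟨q, rfl⟩ : ∃ q, y = 2 * q := ⟨y / 2, by omega⟩
    rw [nafWeight_two_mul, show 2 * (2 * q) + s = 4 * q + s by ring,
      nafWeight_four_mul_add q s hs]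
    omega
  · obtain ⟨q, rfl⟩ : ∃ q, y = 2 * q - s := ⟨(y + s) / 2, by omega⟩
    rw [show 2 * (2 * q - s) + s = 4 * q + -s by ring, nafWeight_four_mul_add q (-s) (by omega)]
    by_cases hqs : q = s
    · subst hqs
      rw [show 2 * q - q = q by ring]
      omega
    · have := nafWeight_two_mul_add_sign q (-s) (by omega)
      rw [← sub_eq_add_neg] at this
      omega
termination_by y.natAbs
decreasing_by omega

theorem nafWeight_add_sign_mul_pow_le (x s : ℤ) (hs : s = 1 ∨ s = -1) (i : ℕ) :
    nafWeight (x + s * 2 ^ i) ≤ nafWeight x + 1 := by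
  induction i generalizing x with
  | zero =>
    rw [pow_zero, mul_one]
    rcases Int.emod_two_eq_zero_or_one x with h | h
    · obtain ⟨y, rfl⟩ : ∃ y, x = 2 * y := ⟨x / 2, by omega⟩
      rw [nafWeight_two_mul]
      exact (nafWeight_two_mul_add_sign y s hs).2
    · obtain ⟨y, rfl⟩ : ∃ y, x = 2 * y + -s := ⟨(x + s) / 2, by omega⟩
      rw [neg_add_cancel_right, nafWeight_two_mul]
      have := (nafWeight_two_mul_add_sign y (-s) (by omega)).1
      omega
  | succ i ih =>
    rcases Int.exists_eq_two_mul_or_four_mul_add x with ⟨y, rfl⟩ | ⟨q, r, hr, rfl⟩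
    · rw [show 2 * y + s * 2 ^ (i + 1) = 2 * (y + s * 2 ^ i) by ring, nafWeight_two_mul,
        nafWeight_two_mul]
      exact ih y
    · rw [show 4 * q + r + s * 2 ^ (i + 1) = 2 * (2 * q + s * 2 ^ i) + r by ring,
        nafWeight_four_mul_add q r hr]
      have h1 := (nafWeight_two_mul_add_sign (2 * q + s * 2 ^ i) r hr).2
      have h2 := ih (2 * q)
      rw [nafWeight_two_mul] at h2
      omega

theorem Spaced.nafWeight_sum {m : ℕ} {k : Fin m → ℕ} {ε : Fin m → ℤ} (hk : Spaced 2 k)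
    (hε : ∀ i, ε i = 1 ∨ ε i = -1) : nafWeight (∑ i, ε i * 2 ^ k i) = m := by
  induction m with
  | zero => simp [nafWeight_zero]
  | succ m ih =>
    rw [hk.sum_mul_pow_eq, nafWeight_two_pow_mul, add_comm (ε 0),
      show (2 : ℤ) ^ 2 = 4 by norm_num, nafWeight_four_mul_add _ _ (hε 0),
      ih hk.tail fun i => hε i.succ]

theorem exists_naf (n : ℤ) : ∃ (m : ℕ) (k : Fin m → ℕ) (ε : Fin m → ℤ),
    Spaced 2 k ∧ (∀ i, ε i = 1 ∨ ε i = -1) ∧ ∑ i, ε i * 2 ^ k i = n := by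
  by_cases hn : n = 0
  · exact ⟨0, Fin.elim0, Fin.elim0, (·.elim0), (·.elim0), by simp [hn]⟩
  rcases Int.exists_eq_two_mul_or_four_mul_add n with ⟨q, rfl⟩ | ⟨q, r, hr, rfl⟩
  · obtain ⟨m, k, ε, hk, hε, rfl⟩ := exists_naf q
    exact ⟨m, fun i => k i + 1, ε, hk.add_const 1, hε, by rw [sum_mul_pow_add, pow_one]⟩
  · obtain ⟨m, k, ε, hk, hε, rfl⟩ := exists_naf q
    refine ⟨m + 1, Fin.cons 0 fun i => k i + 2, Fin.cons r ε, hk.cons_zero, fun i => ?_,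
      by rw [sum_cons_mul_pow, sum_mul_pow_add]; ring⟩
    cases i using Fin.cases
    · simpa using hr
    · simpa using hε _
termination_by n.natAbs
decreasing_by all_goals omega

theorem sign_mul_pow_mem_Ag {g s : ℤ} (hs : s = 1 ∨ s = -1) (i : ℕ) : s * g ^ i ∈ Ag g := by
  rcases hs with rfl | rfl
  · exact .inr ⟨i, .inl (one_mul _)⟩
  · exact .inr ⟨i, .inr (neg_one_mul _)⟩

theorem eq_zero_or_sign_mul_pow_of_mem_Ag {g a : ℤ} (ha : a ∈ Ag g) :
    a = 0 ∨ ∃ (s : ℤ) (i : ℕ), (s = 1 ∨ s = -1) ∧ a = s * g ^ i := by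
  rcases ha with ha | ⟨i, rfl | rfl⟩
  · exact .inl ha
  · exact .inr ⟨1, i, .inl rfl, (one_mul _).symm⟩
  · exact .inr ⟨-1, i, .inr rfl, (neg_one_mul _).symm⟩

theorem weight_sum_le_length_of_mem_Ag {g : ℤ} {w : ℤ → ℕ} (h0 : w 0 = 0)
    (hw : ∀ x s : ℤ, (s = 1 ∨ s = -1) → ∀ i : ℕ, w (x + s * g ^ i) ≤ w x + 1) :
    ∀ l : List ℤ, (∀ a ∈ l, a ∈ Ag g) → w l.sum ≤ l.length
  | [], _ => by simp [h0]
  | a :: l, hl => by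
    have ih := weight_sum_le_length_of_mem_Ag h0 hw l fun b hb => hl b (List.mem_cons_of_mem a hb)
    rw [List.sum_cons, List.length_cons, add_comm a]
    rcases eq_zero_or_sign_mul_pow_of_mem_Ag (hl a List.mem_cons_self) with rfl | ⟨s, i, hs, rfl⟩
    · rw [add_zero]
      omega
    · exact (hw _ s hs i).trans (by omega)

theorem lg_sum_eq {g : ℤ} {w : ℤ → ℕ} (h0 : w 0 = 0)
    (hw : ∀ x s : ℤ, (s = 1 ∨ s = -1) → ∀ i : ℕ, w (x + s * g ^ i) ≤ w x + 1)
    {m : ℕ} {k : Fin m → ℕ} {ε : Fin m → ℤ} (hε : ∀ i, ε i = 1 ∨ ε i = -1)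
    (hm : w (∑ i, ε i * g ^ k i) = m) : lg g (∑ i, ε i * g ^ k i) = m := by
  have hrep : m ∈ {h | ∃ l : List ℤ, (∀ a ∈ l, a ∈ Ag g) ∧ l.sum = ∑ i, ε i * g ^ k i ∧
      l.length = h} :=
    ⟨List.ofFn fun i => ε i * g ^ k i, by simpa using fun i => sign_mul_pow_mem_Ag (hε i) (k i),
      List.sum_ofFn, List.length_ofFn⟩
  refine le_antisymm (Nat.sInf_le hrep) (le_csInf ⟨m, hrep⟩ ?_)
  rintro _ ⟨l, hl, hsum, rfl⟩
  exact hm ▸ hsum ▸ weight_sum_le_length_of_mem_Ag h0 hw l hl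

theorem Spaced.lg_two_sum {m : ℕ} {k : Fin m → ℕ} {ε : Fin m → ℤ} (hk : Spaced 2 k)
    (hε : ∀ i, ε i = 1 ∨ ε i = -1) : lg 2 (∑ i, ε i * 2 ^ k i) = m :=
  lg_sum_eq nafWeight_zero nafWeight_add_sign_mul_pow_le hε (hk.nafWeight_sum hε)

theorem Spaced.lg_three_sum {m : ℕ} {t : Fin m → ℕ} {ε : Fin m → ℤ} (ht : Spaced 1 t)
    (hε : ∀ i, ε i = 1 ∨ ε i = -1) : lg 3 (∑ i, ε i * 3 ^ t i) = m :=
  lg_sum_eq ternaryWeight_zero ternaryWeight_add_sign_mul_pow_le hε (ht.ternaryWeight_sum hε)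

theorem stmt15 (f : ℤ → ℤ)
    (hf : ∀ (m : ℕ) (k : Fin m → ℕ) (ε : Fin m → ℤ),
      (∀ i j : Fin m, (i : ℕ) < j → k i + 2 ≤ k j) →
      (∀ i, ε i = 1 ∨ ε i = -1) →
      f (∑ i, ε i * 2 ^ k i) = ∑ i, ε i * 3 ^ (k i - (i : ℕ))) :
    Function.Bijective f ∧ ∀ n : ℤ, lg 2 n = lg 3 (f n) := by
  refine ⟨⟨fun a b hab => ?_, fun y => ?_⟩, fun n => ?_⟩
  · obtain ⟨m, k, ε, hk, hε, rfl⟩ := exists_naf a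
    obtain ⟨m', k', ε', hk', hε', rfl⟩ := exists_naf b
    rw [hf _ _ _ hk hε, hf _ _ _ hk' hε'] at hab
    obtain rfl : m = m' := by
      rw [← hk.sub_index.ternaryWeight_sum hε, hab, hk'.sub_index.ternaryWeight_sum hε']
    obtain ⟨hkk', rfl⟩ := Spaced.eq_of_sum_mul_pow_eq (by norm_num) (by norm_num)
      hk.sub_index hk'.sub_index hε hε' hab
    obtain rfl : k = k' := funext fun i => by
      have := congrFun hkk' i
      have := hk.index_le i
      have := hk'.index_le i
      omega
    rfl
  · obtain ⟨m, t, ε, ht, hε, rfl⟩ := exists_balancedTernary y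
    exact ⟨_, (hf _ _ _ ht.add_index hε).trans (by simp)⟩
  · obtain ⟨m, k, ε, hk, hε, rfl⟩ := exists_naf n
    rw [hf _ _ _ hk hε, hk.lg_two_sum hε, hk.sub_index.lg_three_sum hε]
end

section
/- For every positive integer r, let m = Σ_{i=0}^{r} 2^{3i} and n = Σ_{i=0}^{r−1} 2^{3(i+1)}. Then m − n = 1, so d₂(m,n) = 1, while d₃(f(m), f(n)) = ℓ₃(1 + Σ_{i=2}^{2r+1} (−1)ⁱ3ⁱ) = 2r + 1, where f is the canonical length-preserving bijection between (ℤ, d₂) and (ℤ, d₃). Consequently sup{d₃(f(m),f(n))/d₂(m,n) : m ≠ n} = ∞ and f is not bi-Lipschitz. -/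
theorem lg_eq_of_forall_le {g n : ℤ} {k : ℕ}
    (hex : ∃ l : List ℤ, (∀ a ∈ l, a ∈ Ag g) ∧ l.sum = n ∧ l.length = k)
    (hle : ∀ l : List ℤ, (∀ a ∈ l, a ∈ Ag g) → l.sum = n → k ≤ l.length) :
    lg g n = k :=
  le_antisymm (Nat.sInf_le hex) <|
    le_csInf ⟨k, hex⟩ fun _ ⟨l, hl, hsum, hlen⟩ => hlen ▸ hle l hl hsum

theorem lg_one (g : ℤ) : lg g 1 = 1 :=
  lg_eq_of_forall_le ⟨[1], by simpa [Ag] using ⟨0, by simp⟩, by simp, rfl⟩ fun l _ hsum => by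
    cases l with
    | nil => simp at hsum
    | cons a l => simp

theorem mul_mem_Ag {g a : ℤ} (ha : a ∈ Ag g) : g * a ∈ Ag g := by
  obtain rfl | ⟨i, rfl | rfl⟩ : a = 0 ∨ ∃ i : ℕ, a = g ^ i ∨ a = -g ^ i := by
    simpa [Ag] using ha
  · simp [Ag]
  · exact Or.inr ⟨i + 1, Or.inl (pow_succ' g i).symm⟩
  · exact Or.inr ⟨i + 1, Or.inr (by ring)⟩

-- `n = 3 * ((n + 1) / 3) + ((n + 1) % 3 - 1)` splits off the last balanced ternary digit.
def balancedTernaryWeight (n : ℤ) : ℕ :=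
  if n = 0 then 0 else ((n + 1) % 3 - 1).natAbs + balancedTernaryWeight ((n + 1) / 3)
termination_by n.natAbs
decreasing_by omega

theorem balancedTernary_induction {P : ℤ → Prop} (zero : P 0)
    (digit : ∀ q δ : ℤ, δ.natAbs ≤ 1 → P q → P (3 * q + δ)) (n : ℤ) : P n :=
  if h : n = 0 then h ▸ zero else by
    have := digit ((n + 1) / 3) ((n + 1) % 3 - 1) (by omega)
      (balancedTernary_induction zero digit ((n + 1) / 3))
    rwa [show 3 * ((n + 1) / 3) + ((n + 1) % 3 - 1) = n by omega] at this
termination_by n.natAbs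
decreasing_by omega

namespace balancedTernaryWeight

theorem zero : balancedTernaryWeight 0 = 0 := by
  simp [balancedTernaryWeight]

theorem three_mul_add {δ : ℤ} (hδ : δ.natAbs ≤ 1) (q : ℤ) :
    balancedTernaryWeight (3 * q + δ) = δ.natAbs + balancedTernaryWeight q := by
  by_cases h : 3 * q + δ = 0
  · obtain ⟨rfl, rfl⟩ : q = 0 ∧ δ = 0 := by omega
    simp [zero]
  · rw [balancedTernaryWeight, if_neg h]
    congr 2 <;> omega

theorem sum_digits_mul_pow (n : ℕ) (δ : ℕ → ℤ) (hδ : ∀ i, (δ i).natAbs ≤ 1) :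
    balancedTernaryWeight (∑ i ∈ Finset.range n, δ i * 3 ^ i) =
      ∑ i ∈ Finset.range n, (δ i).natAbs := by
  induction n generalizing δ with
  | zero => simp [zero]
  | succ n ih =>
    have hshift : ∑ i ∈ Finset.range (n + 1), δ i * 3 ^ i =
        3 * ∑ i ∈ Finset.range n, δ (i + 1) * 3 ^ i + δ 0 := by
      rw [Finset.sum_range_succ', Finset.mul_sum]
      simp only [pow_succ, pow_zero, mul_one]
      congr 1
      exact Finset.sum_congr rfl fun i _ => by ring
    rw [hshift, three_mul_add (hδ 0), ih _ fun i => hδ (i + 1), Finset.sum_range_succ' _ n,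
      add_comm]

theorem add_le_of_natAbs_eq_one (n : ℤ) : ∀ ε : ℤ, ε.natAbs = 1 →
    balancedTernaryWeight (n + ε) ≤ balancedTernaryWeight n + 1 := by
  induction n using balancedTernary_induction with
  | zero =>
    intro ε hε
    rw [show 0 + ε = 3 * 0 + ε by ring, three_mul_add hε.le]
    simp [zero, hε]
  | digit q δ hδ ih =>
    intro ε hε
    rw [three_mul_add hδ]
    -- a carry occurs exactly when `δ + ε = ±2`, and then `3 * q + δ + ε = 3 * (q + ε) - ε`
    by_cases hcarry : (δ + ε).natAbs ≤ 1
    · rw [add_assoc, three_mul_add hcarry]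
      omega
    · rw [show 3 * q + δ + ε = 3 * (q + ε) + -ε by omega, three_mul_add (by omega)]
      have := ih ε hε
      omega

theorem add_mul_three_pow_le (k : ℕ) : ∀ (n ε : ℤ), ε.natAbs = 1 →
    balancedTernaryWeight (n + ε * 3 ^ k) ≤ balancedTernaryWeight n + 1 := by
  induction k with
  | zero => simpa using add_le_of_natAbs_eq_one
  | succ k ih =>
    intro n ε hε
    obtain ⟨q, δ, hδ, rfl⟩ : ∃ q δ : ℤ, δ.natAbs ≤ 1 ∧ n = 3 * q + δ :=
      ⟨(n + 1) / 3, (n + 1) % 3 - 1, by omega, by omega⟩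
    rw [show 3 * q + δ + ε * 3 ^ (k + 1) = 3 * (q + ε * 3 ^ k) + δ by ring,
      three_mul_add hδ, three_mul_add hδ]
    have := ih q ε hε
    omega

end balancedTernaryWeight

theorem balancedTernaryWeight_sum_le_length (l : List ℤ) (hl : ∀ a ∈ l, a ∈ Ag 3) :
    balancedTernaryWeight l.sum ≤ l.length := by
  induction l with
  | nil => simp [balancedTernaryWeight.zero]
  | cons a l ih =>
    have hl' := ih fun x hx => hl x (List.mem_cons_of_mem a hx)
    rw [List.sum_cons, List.length_cons, add_comm a]
    obtain rfl | ⟨i, rfl | rfl⟩ : a = 0 ∨ ∃ i : ℕ, a = 3 ^ i ∨ a = -3 ^ i := by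
      simpa [Ag] using hl a List.mem_cons_self
    · simpa using hl'.trans (Nat.le_succ _)
    · simpa using (balancedTernaryWeight.add_mul_three_pow_le i l.sum 1 rfl).trans (by omega)
    · simpa using (balancedTernaryWeight.add_mul_three_pow_le i l.sum (-1) rfl).trans (by omega)

theorem exists_list_length_eq_balancedTernaryWeight (n : ℤ) :
    ∃ l : List ℤ, (∀ a ∈ l, a ∈ Ag 3) ∧ l.sum = n ∧ l.length = balancedTernaryWeight n := by
  induction n using balancedTernary_induction with
  | zero => exact ⟨[], by simp, rfl, balancedTernaryWeight.zero.symm⟩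
  | digit q δ hδ ih =>
    obtain ⟨l, hl, rfl, hlen⟩ := ih
    obtain ⟨d, hd, hdsum, hdlen⟩ : ∃ d : List ℤ, (∀ a ∈ d, a ∈ Ag 3) ∧ d.sum = δ ∧
        d.length = δ.natAbs := by
      obtain rfl | rfl | rfl : δ = 0 ∨ δ = 1 ∨ δ = -1 := by omega
      · exact ⟨[], by simp, rfl, rfl⟩
      · exact ⟨[1], by simpa [Ag] using ⟨0, by simp⟩, by simp, rfl⟩
      · exact ⟨[-1], by simpa [Ag] using ⟨0, by simp⟩, by simp, rfl⟩
    refine ⟨l.map (3 * ·) ++ d, ?_, ?_, ?_⟩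
    · simp only [List.mem_append, List.mem_map]
      rintro _ (⟨a, ha, rfl⟩ | ha)
      exacts [mul_mem_Ag (hl a ha), hd _ ha]
    · rw [List.sum_append, List.sum_map_mul_left, List.map_id', hdsum]
    · rw [List.length_append, List.length_map, hlen, hdlen,
        balancedTernaryWeight.three_mul_add hδ, add_comm]

theorem lg_three_eq_balancedTernaryWeight (n : ℤ) : lg 3 n = balancedTernaryWeight n :=
  lg_eq_of_forall_le (exists_list_length_eq_balancedTernaryWeight n) fun l hl hsum =>
    hsum ▸ balancedTernaryWeight_sum_le_length l hl

theorem one_add_sum_Icc_eq_sum_range (r : ℕ) :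
    1 + ∑ i ∈ Finset.Icc 2 (2 * r + 1), (-1 : ℤ) ^ i * 3 ^ i =
      ∑ i ∈ Finset.range (2 * r + 2), (if i = 1 then 0 else (-1 : ℤ) ^ i) * 3 ^ i := by
  rw [← Finset.sum_range_add_sum_Ico _ (by omega : 2 ≤ 2 * r + 2),
    ← Finset.Ico_add_one_right_eq_Icc]
  refine congrArg₂ (· + ·) (by decide) (Finset.sum_congr rfl fun i hi => ?_)
  rw [if_neg (by simp at hi; omega)]

theorem balancedTernaryWeight_one_add_sum_Icc (r : ℕ) :
    balancedTernaryWeight (1 + ∑ i ∈ Finset.Icc 2 (2 * r + 1), (-1 : ℤ) ^ i * 3 ^ i) =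
      2 * r + 1 := by
  have htail : ∑ i ∈ Finset.Ico 2 (2 * r + 2), (if i = 1 then 0 else (-1 : ℤ) ^ i).natAbs =
      2 * r := by
    rw [Finset.sum_congr rfl fun i hi => by rw [if_neg (by simp at hi; omega)]]
    simp
  rw [one_add_sum_Icc_eq_sum_range, balancedTernaryWeight.sum_digits_mul_pow _ _ fun i => by
    split_ifs <;> simp, ← Finset.sum_range_add_sum_Ico _ (by omega : 2 ≤ 2 * r + 2), htail]
  simp [Finset.sum_range_succ, add_comm]

theorem map_sum_two_pow_of_spaced {f : ℤ → ℤ}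
    (hf : ∀ (m : ℕ) (k : Fin m → ℕ) (ε : Fin m → ℤ),
      (∀ i j : Fin m, (i : ℕ) < j → k i + 2 ≤ k j) →
      (∀ i, ε i = 1 ∨ ε i = -1) →
      f (∑ i, ε i * 2 ^ k i) = ∑ i, ε i * 3 ^ (k i - (i : ℕ)))
    (m : ℕ) (k : ℕ → ℕ) (hk : ∀ i j, i < j → k i + 2 ≤ k j) :
    f (∑ i ∈ Finset.range m, (2 : ℤ) ^ k i) = ∑ i ∈ Finset.range m, (3 : ℤ) ^ (k i - i) := by
  have := hf m (fun i => k i) (fun _ => 1) (fun i j hij => hk i j hij) fun _ => Or.inl rfl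
  simp only [one_mul] at this
  rwa [Fin.sum_univ_eq_sum_range (fun i => (2 : ℤ) ^ k i),
    Fin.sum_univ_eq_sum_range (fun i => (3 : ℤ) ^ (k i - i))] at this

theorem sum_range_three_pow_sub_sum_range (r : ℕ) :
    ∑ i ∈ Finset.range (r + 1), (3 : ℤ) ^ (2 * i) - ∑ i ∈ Finset.range r, (3 : ℤ) ^ (2 * i + 3) =
      1 + ∑ i ∈ Finset.Icc 2 (2 * r + 1), (-1 : ℤ) ^ i * 3 ^ i := by
  induction r with
  | zero => simp
  | succ r ih =>
    rw [Finset.sum_range_succ (fun i => (3 : ℤ) ^ (2 * i)) (r + 1),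
      Finset.sum_range_succ (fun i => (3 : ℤ) ^ (2 * i + 3)) r,
      show 2 * (r + 1) + 1 = 2 * r + 2 + 1 by ring,
      Finset.sum_Icc_succ_top (by omega), Finset.sum_Icc_succ_top (by omega),
      Even.neg_one_pow ⟨r + 1, by ring⟩, Odd.neg_one_pow ⟨r + 1, by ring⟩]
    linear_combination ih

theorem map_sub_map_eq_one_add_sum_Icc {f : ℤ → ℤ}
    (hf : ∀ (m : ℕ) (k : Fin m → ℕ) (ε : Fin m → ℤ),
      (∀ i j : Fin m, (i : ℕ) < j → k i + 2 ≤ k j) →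
      (∀ i, ε i = 1 ∨ ε i = -1) →
      f (∑ i, ε i * 2 ^ k i) = ∑ i, ε i * 3 ^ (k i - (i : ℕ))) (r : ℕ) :
    f (∑ i ∈ Finset.range (r + 1), (2 : ℤ) ^ (3 * i)) -
        f (∑ i ∈ Finset.range r, (2 : ℤ) ^ (3 * (i + 1))) =
      1 + ∑ i ∈ Finset.Icc 2 (2 * r + 1), (-1 : ℤ) ^ i * 3 ^ i := by
  rw [map_sum_two_pow_of_spaced hf _ _ fun i j hij => by omega,
    map_sum_two_pow_of_spaced hf _ _ fun i j hij => by omega, ← sum_range_three_pow_sub_sum_range]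
  congr 1 <;> refine Finset.sum_congr rfl fun i _ => congrArg _ (by omega)

theorem stmt16 (f : ℤ → ℤ)
    (hf : ∀ (m : ℕ) (k : Fin m → ℕ) (ε : Fin m → ℤ),
      (∀ i j : Fin m, (i : ℕ) < j → k i + 2 ≤ k j) →
      (∀ i, ε i = 1 ∨ ε i = -1) →
      f (∑ i, ε i * 2 ^ k i) = ∑ i, ε i * 3 ^ (k i - (i : ℕ))) :
    (∀ r : ℕ, 0 < r →
      (∑ i ∈ Finset.range (r + 1), (2 : ℤ) ^ (3 * i)) -
          (∑ i ∈ Finset.range r, (2 : ℤ) ^ (3 * (i + 1))) = 1 ∧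
      lg 2 ((∑ i ∈ Finset.range (r + 1), (2 : ℤ) ^ (3 * i)) -
          ∑ i ∈ Finset.range r, (2 : ℤ) ^ (3 * (i + 1))) = 1 ∧
      lg 3 (1 + ∑ i ∈ Finset.Icc 2 (2 * r + 1), (-1 : ℤ) ^ i * 3 ^ i) = 2 * r + 1 ∧
      lg 3 (f (∑ i ∈ Finset.range (r + 1), (2 : ℤ) ^ (3 * i)) -
          f (∑ i ∈ Finset.range r, (2 : ℤ) ^ (3 * (i + 1)))) = 2 * r + 1) ∧
    (∀ L : ℕ, ∃ m n : ℤ, m ≠ n ∧ L * lg 2 (m - n) < lg 3 (f m - f n)) := by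
  have hsub (r : ℕ) : ∑ i ∈ Finset.range (r + 1), (2 : ℤ) ^ (3 * i) -
      ∑ i ∈ Finset.range r, (2 : ℤ) ^ (3 * (i + 1)) = 1 := by
    simp [Finset.sum_range_succ']
  have hlg3 (r : ℕ) :
      lg 3 (1 + ∑ i ∈ Finset.Icc 2 (2 * r + 1), (-1 : ℤ) ^ i * 3 ^ i) = 2 * r + 1 := by
    rw [lg_three_eq_balancedTernaryWeight, balancedTernaryWeight_one_add_sum_Icc]
  refine ⟨fun r _ => ⟨hsub r, by rw [hsub, lg_one], hlg3 r,
    by rw [map_sub_map_eq_one_add_sum_Icc hf, hlg3]⟩, fun L => ?_⟩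
  refine ⟨∑ i ∈ Finset.range (L + 1 + 1), (2 : ℤ) ^ (3 * i),
    ∑ i ∈ Finset.range (L + 1), (2 : ℤ) ^ (3 * (i + 1)), ?_, ?_⟩
  · exact sub_ne_zero.mp ((hsub (L + 1)).symm ▸ one_ne_zero)
  · rw [hsub, lg_one, map_sub_map_eq_one_add_sum_Icc hf, hlg3]
    omega
end

section
/- Let W be a nonempty finite set of integers. Then every complement to W in the additive group ℤ contains a minimal complement to W; here C ⊆ ℤ is a complement to W if W + C = ℤ, and C is minimal if no proper subset of C is a complement to W. -/
/-!
Zorn's lemma applies to the complements of `W` ordered by inclusion, because the intersection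
of a nonempty chain of complements is again a complement when `W` is finite: if `n` were not
covered, each of the finitely many points `-w + n` (`w ∈ W`) would be missing from some member
of the chain, hence all of them from the smallest of those members, which then misses `n`.
-/

open Pointwise Set

section

variable {G : Type*} [AddGroup G]

theorem notMem_add_iff_image_subset_compl {W D : Set G} {n : G} :
    n ∉ W + D ↔ (fun w => -w + n) '' W ⊆ Dᶜ := by
  simp only [mem_add, image_subset_iff, not_exists, not_and]
  refine forall₂_congr fun w _ => ⟨fun h hD => h _ hD (add_neg_cancel_left w n), ?_⟩
  rintro h d hd rfl
  exact h (by simpa only [mem_preimage, neg_add_cancel_left] using hd)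

theorem add_sInter_eq_univ_of_isChain {W : Set G} (hW : W.Finite) {c : Set (Set G)}
    (hc : IsChain (· ⊆ ·) c) (hne : c.Nonempty) (h : ∀ D ∈ c, W + D = univ) :
    W + ⋂₀ c = univ := by
  refine eq_univ_of_forall fun n => by_contra fun hn => ?_
  rw [notMem_add_iff_image_subset_compl, compl_sInter] at hn
  have hdir : DirectedOn (· ⊆ ·) (compl '' c) :=
    (hc.symm.image_of_map_rel _ _ compl fun _ _ => compl_subset_compl.mpr).directedOn
  obtain ⟨_, ⟨D, hD, rfl⟩, hsub⟩ :=
    hdir.exists_mem_subset_of_finite_of_subset_sUnion (hne.image _) (hW.image _) hn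
  exact notMem_add_iff_image_subset_compl.mpr hsub (h D hD ▸ mem_univ n)

theorem exists_subset_minimal_add_eq_univ {W : Set G} (hW : W.Finite) {C : Set G}
    (hC : W + C = univ) : ∃ M ⊆ C, Minimal (fun D => W + D = univ) M :=
  zorn_superset_nonempty {D | W + D = univ}
    (fun c hcS hc hne => ⟨⋂₀ c, add_sInter_eq_univ_of_isChain hW hc hne hcS,
      fun _ => sInter_subset_of_mem⟩) C hC

end

theorem stmt17_general (W : Set ℤ) (hW : W.Finite)
    (C : Set ℤ) (hC : W + C = Set.univ) :
    ∃ M ⊆ C, W + M = Set.univ ∧ ∀ M' : Set ℤ, M' ⊂ M → W + M' ≠ Set.univ := by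
  obtain ⟨M, hMC, hM⟩ := exists_subset_minimal_add_eq_univ hW hC
  exact ⟨M, hMC, hM.prop, fun _ hM' => hM.not_prop_of_ssubset hM'⟩

theorem stmt17 (W : Set ℤ) (hW : W.Finite) (hWne : W.Nonempty)
    (C : Set ℤ) (hC : W + C = Set.univ) :
    ∃ M ⊆ C, W + M = Set.univ ∧ ∀ M' : Set ℤ, M' ⊂ M → W + M' ≠ Set.univ :=
  stmt17_general W hW C hC
end
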